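/- arXiv:2204.09870 — 2 statements merged into one kernel-verified Lean document; each statement's English description precedes it below -/
import Mathlib

section
/- Let G be a finite simple graph on n = 2k+1 vertices with adjacency matrix A(G) and least eigenvalue λ_n(G). Then |λ_n(G)| ≤ √(k(k+1)). -/
open Matrix Finset

/-- `σ` is a sign function on the edges of `G`: symmetric and `±1` on edges. -/
def IsSignFn {n : ℕ} (G : SimpleGraph (Fin n)) (σ : Fin n → Fin n → ℝ) : Prop :=
  (∀ i j, σ i j = σ j i) ∧ ∀ i j, G.Adj i j → σ i j = 1 ∨ σ i j = -1

/-- The adjacency matrix of the signed graph `(G, σ)`. -/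
def signedAdj {n : ℕ} (G : SimpleGraph (Fin n)) [DecidableRel G.Adj]
    (σ : Fin n → Fin n → ℝ) : Matrix (Fin n) (Fin n) ℝ :=
  fun i j => if G.Adj i j then σ i j else 0

/-- The sign of a walk: the product of the signs of its edges (with multiplicity). -/
def walkSign {V : Type*} {G : SimpleGraph V} (σ : V → V → ℝ) {u v : V} (w : G.Walk u v) : ℝ :=
  (w.darts.map fun d => σ d.toProd.1 d.toProd.2).prod

/-- A signed graph is balanced if every cycle has sign `+1`. -/
def IsBalanced {V : Type*} (G : SimpleGraph V) (σ : V → V → ℝ) : Prop :=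
  ∀ (u : V) (w : G.Walk u u), w.IsCycle → walkSign σ w = 1

/-- The set of cardinalities of edge sets whose deletion makes `(G, σ)` balanced.
The frustration index is the least element of this set. -/
def FrustrationSet {n : ℕ} (G : SimpleGraph (Fin n)) (σ : Fin n → Fin n → ℝ) : Set ℕ :=
  {k | ∃ F : Finset (Sym2 (Fin n)), ↑F ⊆ G.edgeSet ∧
    IsBalanced (G.deleteEdges ↑F) σ ∧ F.card = k}

/-- `S` induces a balanced complete subgraph of `(G, σ)`:
`S` is a clique and every cycle inside `S` has sign `+1`. -/
def IsBalancedClique {n : ℕ} (G : SimpleGraph (Fin n)) (σ : Fin n → Fin n → ℝ)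
    (S : Finset (Fin n)) : Prop :=
  G.IsClique (S : Set (Fin n)) ∧
    ∀ (u : Fin n) (w : G.Walk u u), w.IsCycle → (∀ v ∈ w.support, v ∈ S) → walkSign σ w = 1

/-- The set of cardinalities of balanced cliques of `(G, σ)`.
The balanced clique number is the greatest element of this set. -/
def BalancedCliqueSet {n : ℕ} (G : SimpleGraph (Fin n)) (σ : Fin n → Fin n → ℝ) : Set ℕ :=
  {k | ∃ S : Finset (Fin n), IsBalancedClique G σ S ∧ S.card = k}

/-- Switching equivalence of two sign functions on the same underlying graph. -/
def SwitchingEquiv {n : ℕ} (G : SimpleGraph (Fin n)) (σ₁ σ₂ : Fin n → Fin n → ℝ) : Prop :=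
  ∃ η : Fin n → ℝ, (∀ v, η v = 1 ∨ η v = -1) ∧ ∀ i j, G.Adj i j → σ₂ i j = η i * σ₁ i j * η j

/-!
Let `v` be a unit eigenvector for `λₙ`, and write `v = v⁺ - v⁻` with `P = ∑ v⁺`, `Q = ∑ v⁻`.
Since the entries of `A` lie in `[0, 1]`, `-λₙ = -vᵀAv ≤ 2PQ`. By Cauchy–Schwarz
`P² ≤ s ‖v⁺‖²` and `Q² ≤ t ‖v⁻‖²`, where `s` and `t` count the positive and negative
coordinates of `v`; with `‖v⁺‖² + ‖v⁻‖² = 1` this gives `λₙ² ≤ 4P²Q² ≤ st ≤ k(k+1)`,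
because `s + t ≤ 2k + 1`. Finally `λₙ ≤ 0` since the eigenvalues sum to `tr A = 0`.
-/

theorem neg_mul_mul_le_posPart_mul_negPart {a : ℝ} (ha0 : 0 ≤ a) (ha1 : a ≤ 1) (x y : ℝ) :
    -(a * x * y) ≤ x⁺ * y⁻ + x⁻ * y⁺ := by
  have hsame : 0 ≤ x⁺ * y⁺ + x⁻ * y⁻ := by positivity
  have hcross : 0 ≤ x⁺ * y⁻ + x⁻ * y⁺ := by positivity
  have hxy : x * y = (x⁺ * y⁺ + x⁻ * y⁻) - (x⁺ * y⁻ + x⁻ * y⁺) := by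
    linear_combination (-(x⁺ - x⁻)) * posPart_sub_negPart y - y * posPart_sub_negPart x
  have hmul : a * x * y = a * (x⁺ * y⁺ + x⁻ * y⁻) - a * (x⁺ * y⁻ + x⁻ * y⁺) := by
    rw [mul_assoc, hxy, mul_sub]
  nlinarith [mul_nonneg ha0 hsame, mul_nonneg (sub_nonneg.2 ha1) hcross]

theorem posPart_sq_add_negPart_sq (x : ℝ) : x⁺ ^ 2 + x⁻ ^ 2 = x ^ 2 := by
  rcases le_total 0 x with hx | hx <;> simp [hx]

theorem sq_sum_le_card_support_mul_sum_sq {ι : Type*} [Fintype ι] (f : ι → ℝ) :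
    (∑ i, f i) ^ 2 ≤ #{i | f i ≠ 0} * ∑ i, f i ^ 2 := by
  rw [← sum_filter_ne_zero]
  refine sq_sum_le_card_mul_sum_sq.trans (mul_le_mul_of_nonneg_left ?_ (Nat.cast_nonneg _))
  exact sum_le_sum_of_subset_of_nonneg (filter_subset _ _) fun i _ _ => sq_nonneg (f i)

theorem Nat.mul_le_of_add_le_two_mul_add_one {s t k : ℕ} (h : s + t ≤ 2 * k + 1) :
    s * t ≤ k * (k + 1) := by
  rcases le_or_gt s k with hs | hs <;> nlinarith

section QuadraticForm

variable {ι : Type*} [Fintype ι] (A : Matrix ι ι ℝ)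

theorem neg_dotProduct_mulVec_le (hA0 : ∀ i j, 0 ≤ A i j) (hA1 : ∀ i j, A i j ≤ 1)
    (v : ι → ℝ) : -(v ⬝ᵥ A *ᵥ v) ≤ 2 * (∑ i, (v i)⁺) * ∑ i, (v i)⁻ := by
  have hform : v ⬝ᵥ A *ᵥ v = ∑ i, ∑ j, A i j * v i * v j := by
    simp only [dotProduct, mulVec, mul_sum]
    exact sum_congr rfl fun i _ => sum_congr rfl fun j _ => by ring
  calc -(v ⬝ᵥ A *ᵥ v) = ∑ i, ∑ j, -(A i j * v i * v j) := by simp [hform]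
    _ ≤ ∑ i, ∑ j, ((v i)⁺ * (v j)⁻ + (v i)⁻ * (v j)⁺) := by
      gcongr with i _ j _
      exact neg_mul_mul_le_posPart_mul_negPart (hA0 i j) (hA1 i j) _ _
    _ = 2 * (∑ i, (v i)⁺) * ∑ i, (v i)⁻ := by
      simp only [sum_add_distrib, ← mul_sum, ← sum_mul]
      ring

theorem neg_dotProduct_mulVec_le_sqrt_mul_dotProduct_self (hA0 : ∀ i j, 0 ≤ A i j)
    (hA1 : ∀ i j, A i j ≤ 1) {k : ℕ} (hcard : Fintype.card ι ≤ 2 * k + 1) (v : ι → ℝ) :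
    -(v ⬝ᵥ A *ᵥ v) ≤ √((k : ℝ) * (k + 1)) * (v ⬝ᵥ v) := by
  set P := ∑ i, (v i)⁺
  set Q := ∑ i, (v i)⁻
  set s := #{i | (v i)⁺ ≠ 0}
  set t := #{i | (v i)⁻ ≠ 0}
  have hP : P ^ 2 ≤ s * ∑ i, (v i)⁺ ^ 2 := sq_sum_le_card_support_mul_sum_sq _
  have hQ : Q ^ 2 ≤ t * ∑ i, (v i)⁻ ^ 2 := sq_sum_le_card_support_mul_sum_sq _
  have hnorm : ∑ i, (v i)⁺ ^ 2 + ∑ i, (v i)⁻ ^ 2 = v ⬝ᵥ v := by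
    rw [← sum_add_distrib, dotProduct]
    exact sum_congr rfl fun i _ => by rw [posPart_sq_add_negPart_sq, sq]
  have hst : (s : ℝ) * t ≤ k * (k + 1) := by
    classical
    have hdisj : Disjoint ({i | (v i)⁺ ≠ 0} : Finset ι) ({i | (v i)⁻ ≠ 0} : Finset ι) := by
      refine disjoint_filter.2 fun i _ hpos hneg => ?_
      rw [Ne, posPart_eq_zero, not_le] at hpos
      exact hneg (negPart_eq_zero.2 hpos.le)
    exact_mod_cast Nat.mul_le_of_add_le_two_mul_add_one
      ((card_union_of_disjoint hdisj).symm.le.trans ((card_le_univ _).trans hcard))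
  have hPQ : (2 * P * Q) ^ 2 ≤ k * (k + 1) * (v ⬝ᵥ v) ^ 2 := by
    set a := ∑ i, (v i)⁺ ^ 2
    set b := ∑ i, (v i)⁻ ^ 2
    have ha : 0 ≤ a := sum_nonneg fun i _ => sq_nonneg _
    have hb : 0 ≤ b := sum_nonneg fun i _ => sq_nonneg _
    calc (2 * P * Q) ^ 2 = 4 * P ^ 2 * Q ^ 2 := by ring
      _ ≤ 4 * (s * a) * (t * b) := by gcongr
      _ = s * t * (4 * a * b) := by ring
      _ ≤ k * (k + 1) * (a + b) ^ 2 :=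
        mul_le_mul hst (by nlinarith [sq_nonneg (a - b)]) (by positivity) (by positivity)
      _ = k * (k + 1) * (v ⬝ᵥ v) ^ 2 := by rw [hnorm]
  have hvv : 0 ≤ v ⬝ᵥ v := hnorm ▸ by positivity
  calc -(v ⬝ᵥ A *ᵥ v) ≤ 2 * P * Q := neg_dotProduct_mulVec_le A hA0 hA1 v
    _ ≤ √(k * (k + 1) * (v ⬝ᵥ v) ^ 2) := (le_abs_self _).trans (Real.abs_le_sqrt hPQ)
    _ = √((k : ℝ) * (k + 1)) * (v ⬝ᵥ v) := by
      rw [Real.sqrt_mul' _ (sq_nonneg _), Real.sqrt_sq hvv]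

end QuadraticForm

theorem nonpos_of_isLeast_range_of_sum_eq_zero {ι : Type*} [Fintype ι] [Nonempty ι]
    {f : ι → ℝ} (hf : ∑ i, f i = 0) {m : ℝ} (hm : IsLeast (Set.range f) m) : m ≤ 0 := by
  obtain ⟨j, -, hj⟩ := exists_le_of_sum_le (g := 0) univ_nonempty
    (by rw [hf, Pi.zero_def, sum_const_zero])
  exact (hm.2 ⟨j, rfl⟩).trans hj

theorem Matrix.IsHermitian.ofLp_eigenvectorBasis_dotProduct_self {ι : Type*} [Fintype ι]
    [DecidableEq ι] {A : Matrix ι ι ℝ} (hA : A.IsHermitian) (i : ι) :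
    (hA.eigenvectorBasis i).ofLp ⬝ᵥ (hA.eigenvectorBasis i).ofLp = 1 := by
  have h := real_inner_self_eq_norm_sq (hA.eigenvectorBasis i)
  rw [EuclideanSpace.inner_eq_star_dotProduct, star_trivial,
    hA.eigenvectorBasis.orthonormal.1 i] at h
  simpa using h

/-- For a graph on `n = 2k+1` vertices, `|λ_n(G)| ≤ √(k(k+1))`. -/
theorem stmt_5 (k : ℕ) (G : SimpleGraph (Fin (2 * k + 1))) [DecidableRel G.Adj]
    (hA : (G.adjMatrix ℝ).IsHermitian)
    (lamn : ℝ) (hlam : IsLeast (Set.range hA.eigenvalues) lamn) :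
    |lamn| ≤ Real.sqrt ((k : ℝ) * (k + 1)) := by
  have htrace : ∑ j, hA.eigenvalues j = 0 := by
    have := hA.trace_eq_sum_eigenvalues
    rw [SimpleGraph.trace_adjMatrix] at this
    exact_mod_cast this.symm
  rw [abs_of_nonpos (nonpos_of_isLeast_range_of_sum_eq_zero htrace hlam)]
  obtain ⟨⟨i, rfl⟩, -⟩ := hlam
  have hA0 : ∀ x y, 0 ≤ G.adjMatrix ℝ x y := fun x y => by
    rw [SimpleGraph.adjMatrix_apply]; split_ifs <;> norm_num
  have hA1 : ∀ x y, G.adjMatrix ℝ x y ≤ 1 := fun x y => by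
    rw [SimpleGraph.adjMatrix_apply]; split_ifs <;> norm_num
  have hbound := neg_dotProduct_mulVec_le_sqrt_mul_dotProduct_self _ hA0 hA1
    (Fintype.card_fin _).le (hA.eigenvectorBasis i).ofLp
  rw [hA.ofLp_eigenvectorBasis_dotProduct_self, mul_one] at hbound
  simpa [hA.eigenvalues_eq] using hbound
end

section
/- Let Σ = (G, σ) be a signed graph with m edges and frustration index ε(Σ), and let λ₁(Σ) be the largest eigenvalue of its adjacency matrix A(Σ). Then λ₁(Σ) ≤ √(2(m − ε(Σ)) + 1/4) − 1/2. -/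
open Matrix Finset

/-!
Let `x` be a unit eigenvector for `λ₁` and switch `σ` by the signs `η` of the entries of `x`.
Edges that become negative only decrease the quadratic form, so `λ₁ = xᵀ A x ≤ |x|ᵀ A(H) |x|`,
where `H` is the graph of edges that are positive after switching. `H` is balanced, so deleting
the remaining edges shows `ε ≤ m - e(H)`. Stanley's argument bounds the quadratic form
`S = yᵀ A(H) y` of a unit vector by `S² + S ≤ 2 e(H)`: Cauchy–Schwarz gives
`S² ≤ ‖A(H) y‖² ≤ ∑ᵤ yᵤ² ∑_{v ∼ u} d_v`, AM–GM gives `S ≤ ∑ᵤ dᵤ yᵤ²`, and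
`∑_{v ∼ u} d_v + dᵤ ≤ ∑_v d_v = 2 e(H)`.
-/

namespace SimpleGraph

variable {V : Type*} [Fintype V] (G : SimpleGraph V) [DecidableRel G.Adj]

theorem sum_sum_neighborFinset_comm {M : Type*} [AddCommMonoid M] (g : V → V → M) :
    ∑ v, ∑ u ∈ G.neighborFinset v, g v u = ∑ u, ∑ v ∈ G.neighborFinset u, g v u := by
  simp only [neighborFinset_eq_filter, sum_filter]
  rw [sum_comm]
  simp only [adj_comm]

theorem sum_sum_neighborFinset {M : Type*} [AddCommMonoid M] (f : V → M) :
    ∑ v, ∑ u ∈ G.neighborFinset v, f u = ∑ u, G.degree u • f u := by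
  rw [sum_sum_neighborFinset_comm]
  simp [card_neighborFinset_eq_degree]

theorem sum_degree_neighborFinset_add_degree_le [DecidableEq V] (u : V) :
    ∑ v ∈ G.neighborFinset u, G.degree v + G.degree u ≤ 2 * #G.edgeFinset := by
  calc ∑ v ∈ G.neighborFinset u, G.degree v + G.degree u
      = ∑ v ∈ insert u (G.neighborFinset u), G.degree v := by
        rw [sum_insert (G.notMem_neighborFinset_self u), add_comm]
    _ ≤ ∑ v, G.degree v := sum_le_univ_sum_of_nonneg fun _ => Nat.zero_le _
    _ = 2 * #G.edgeFinset := G.sum_degrees_eq_twice_card_edges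

theorem dotProduct_adjMatrix_mulVec_le (y : V → ℝ) :
    y ⬝ᵥ G.adjMatrix ℝ *ᵥ y ≤ ∑ u, G.degree u * y u ^ 2 := by
  have amgm : ∀ u v, y u * y v ≤ (y u ^ 2 + y v ^ 2) / 2 := fun u v => by
    nlinarith [sq_nonneg (y u - y v)]
  calc y ⬝ᵥ G.adjMatrix ℝ *ᵥ y = ∑ u, ∑ v ∈ G.neighborFinset u, y u * y v := by
        simp [dotProduct, mul_sum]
    _ ≤ ∑ u, ∑ v ∈ G.neighborFinset u, (y u ^ 2 + y v ^ 2) / 2 :=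
        sum_le_sum fun u _ => sum_le_sum fun v _ => amgm u v
    _ = ∑ u, ∑ v ∈ G.neighborFinset u, y u ^ 2 / 2 + ∑ u, ∑ v ∈ G.neighborFinset u, y v ^ 2 / 2 :=
        by simp only [add_div, sum_add_distrib]
    _ = ∑ u, G.degree u * y u ^ 2 := by
        simp only [G.sum_sum_neighborFinset fun v => y v ^ 2 / 2, sum_const,
          card_neighborFinset_eq_degree, nsmul_eq_mul, ← sum_add_distrib]
        exact sum_congr rfl fun u _ => by ring

theorem sum_sq_adjMatrix_mulVec_le (y : V → ℝ) :
    ∑ v, (G.adjMatrix ℝ *ᵥ y) v ^ 2 ≤ ∑ u, y u ^ 2 * ∑ v ∈ G.neighborFinset u, (G.degree v : ℝ) := by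
  calc ∑ v, (G.adjMatrix ℝ *ᵥ y) v ^ 2
      ≤ ∑ v, ∑ u ∈ G.neighborFinset v, (G.degree v : ℝ) * y u ^ 2 := by
        refine sum_le_sum fun v _ => ?_
        rw [adjMatrix_mulVec_apply, ← mul_sum, ← card_neighborFinset_eq_degree]
        exact sq_sum_le_card_mul_sum_sq
    _ = ∑ u, y u ^ 2 * ∑ v ∈ G.neighborFinset u, (G.degree v : ℝ) := by
        rw [sum_sum_neighborFinset_comm]
        simp only [mul_sum, mul_comm]

theorem sq_add_self_dotProduct_adjMatrix_mulVec_le [DecidableEq V] (y : V → ℝ)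
    (hy : ∑ v, y v ^ 2 = 1) :
    (y ⬝ᵥ G.adjMatrix ℝ *ᵥ y) ^ 2 + y ⬝ᵥ G.adjMatrix ℝ *ᵥ y ≤ 2 * #G.edgeFinset := by
  have hCS : (y ⬝ᵥ G.adjMatrix ℝ *ᵥ y) ^ 2 ≤ ∑ v, (G.adjMatrix ℝ *ᵥ y) v ^ 2 := by
    have := sum_mul_sq_le_sq_mul_sq univ y (G.adjMatrix ℝ *ᵥ y)
    rwa [hy, one_mul] at this
  have hdeg : ∀ u, ∑ v ∈ G.neighborFinset u, (G.degree v : ℝ) + G.degree u ≤ 2 * #G.edgeFinset :=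
    fun u => by exact_mod_cast G.sum_degree_neighborFinset_add_degree_le u
  calc (y ⬝ᵥ G.adjMatrix ℝ *ᵥ y) ^ 2 + y ⬝ᵥ G.adjMatrix ℝ *ᵥ y
      ≤ ∑ u, y u ^ 2 * ∑ v ∈ G.neighborFinset u, (G.degree v : ℝ) + ∑ u, G.degree u * y u ^ 2 :=
        add_le_add (hCS.trans (G.sum_sq_adjMatrix_mulVec_le y)) (G.dotProduct_adjMatrix_mulVec_le y)
    _ = ∑ u, y u ^ 2 * (∑ v ∈ G.neighborFinset u, (G.degree v : ℝ) + G.degree u) := by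
        rw [← sum_add_distrib]
        exact sum_congr rfl fun u _ => by ring
    _ ≤ ∑ u, y u ^ 2 * (2 * #G.edgeFinset) :=
        sum_le_sum fun u _ => mul_le_mul_of_nonneg_left (hdeg u) (sq_nonneg _)
    _ = 2 * #G.edgeFinset := by rw [← sum_mul, hy, one_mul]

end SimpleGraph

section Switching

variable {V : Type*}

theorem walkSign_eq_mul_of_adj_eq_mul {H : SimpleGraph V} {σ : V → V → ℝ} {η : V → ℝ}
    (hη : ∀ v, η v * η v = 1) (hσ : ∀ a b, H.Adj a b → σ a b = η a * η b) {u v : V}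
    (w : H.Walk u v) : walkSign σ w = η u * η v := by
  induction w with
  | nil => simp [walkSign, hη]
  | @cons a b c hab p ih =>
    have hcons : walkSign σ (.cons hab p) = σ a b * walkSign σ p := by simp [walkSign]
    rw [hcons, ih, hσ a b hab]
    linear_combination η a * η c * hη b

theorem isBalanced_of_adj_eq_mul {H : SimpleGraph V} {σ : V → V → ℝ} {η : V → ℝ}
    (hη : ∀ v, η v * η v = 1) (hσ : ∀ a b, H.Adj a b → σ a b = η a * η b) :
    IsBalanced H σ :=
  fun u w _ => (walkSign_eq_mul_of_adj_eq_mul hη hσ w).trans (hη u)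

def switchPositiveGraph (G : SimpleGraph V) (σ : V → V → ℝ) (hσ : ∀ i j, σ i j = σ j i)
    (η : V → ℝ) : SimpleGraph V where
  Adj a b := G.Adj a b ∧ σ a b * (η a * η b) = 1
  symm := ⟨fun a b h => ⟨h.1.symm, by rw [hσ, mul_comm (η b)]; exact h.2⟩⟩
  loopless := ⟨fun a h => G.loopless.irrefl a h.1⟩

variable (G : SimpleGraph V) (σ : V → V → ℝ) (hσ : ∀ i j, σ i j = σ j i) (η : V → ℝ)

noncomputable instance [DecidableRel G.Adj] : DecidableRel (switchPositiveGraph G σ hσ η).Adj :=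
  fun a b => inferInstanceAs (Decidable (G.Adj a b ∧ σ a b * (η a * η b) = 1))

theorem switchPositiveGraph_adj {a b : V} :
    (switchPositiveGraph G σ hσ η).Adj a b ↔ G.Adj a b ∧ σ a b * (η a * η b) = 1 :=
  Iff.rfl

theorem switchPositiveGraph_le : switchPositiveGraph G σ hσ η ≤ G := fun _ _ h => h.1

theorem isBalanced_switchPositiveGraph (hη : ∀ v, η v * η v = 1) :
    IsBalanced (switchPositiveGraph G σ hσ η) σ :=
  isBalanced_of_adj_eq_mul hη fun a b h => by
    linear_combination η a * η b * h.2 - σ a b * hη a - σ a b * η a * η a * hη b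

end Switching

theorem card_edgeFinset_add_le_of_isBalanced {n : ℕ} {G H : SimpleGraph (Fin n)}
    [DecidableRel G.Adj] [DecidableRel H.Adj] {σ : Fin n → Fin n → ℝ} (hHG : H ≤ G)
    (hH : IsBalanced H σ) {ε : ℕ} (hε : ε ∈ lowerBounds (FrustrationSet G σ)) :
    ε + #H.edgeFinset ≤ #G.edgeFinset := by
  have hsub : H.edgeFinset ⊆ G.edgeFinset := SimpleGraph.edgeFinset_mono hHG
  have hF : G.edgeFinset \ H.edgeFinset = (G.edgeSet \ H.edgeSet : Set _) := by
    rw [coe_sdiff, SimpleGraph.coe_edgeFinset, SimpleGraph.coe_edgeFinset]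
  have hmem : #(G.edgeFinset \ H.edgeFinset) ∈ FrustrationSet G σ :=
    ⟨_, by rw [hF]; exact Set.sdiff_subset,
      by rwa [hF, SimpleGraph.deleteEdges_sdiff_eq_of_le hHG], rfl⟩
  have := card_sdiff_add_card_eq_card hsub
  have := hε hmem
  omega

theorem mul_signedAdj_apply_mul_le {n : ℕ} (G : SimpleGraph (Fin n)) [DecidableRel G.Adj]
    (σ : Fin n → Fin n → ℝ) (hσ : IsSignFn G σ) {x η : Fin n → ℝ}
    (hη : ∀ v, η v = 1 ∨ η v = -1) (hx : ∀ v, x v = η v * |x v|) (a b : Fin n) :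
    x a * (signedAdj G σ a b * x b) ≤
      |x a| * ((switchPositiveGraph G σ hσ.1 η).adjMatrix ℝ a b * |x b|) := by
  simp only [SimpleGraph.adjMatrix_apply, switchPositiveGraph_adj]
  by_cases hab : G.Adj a b
  · have hprod : x a * (signedAdj G σ a b * x b) = σ a b * (η a * η b) * (|x a| * |x b|) := by
      rw [signedAdj, if_pos hab]
      linear_combination σ a b * x b * hx a + σ a b * η a * |x a| * hx b
    have hsign : σ a b * (η a * η b) = 1 ∨ σ a b * (η a * η b) = -1 := by
      rcases hσ.2 a b hab with h | h <;> rcases hη a with ha | ha <;> rcases hη b with hb | hb <;>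
        norm_num [h, ha, hb]
    rcases hsign with hpos | hneg
    · rw [hprod, if_pos ⟨hab, hpos⟩, hpos]
      exact le_of_eq (by ring)
    · rw [hprod, hneg, if_neg fun h => by linarith [h.2]]
      nlinarith [abs_nonneg (x a), abs_nonneg (x b)]
  · simp [signedAdj, hab]

theorem dotProduct_signedAdj_mulVec_le {n : ℕ} (G : SimpleGraph (Fin n)) [DecidableRel G.Adj]
    (σ : Fin n → Fin n → ℝ) (hσ : IsSignFn G σ) {x η : Fin n → ℝ}
    (hη : ∀ v, η v = 1 ∨ η v = -1) (hx : ∀ v, x v = η v * |x v|) :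
    x ⬝ᵥ signedAdj G σ *ᵥ x ≤ |x| ⬝ᵥ (switchPositiveGraph G σ hσ.1 η).adjMatrix ℝ *ᵥ |x| := by
  simp only [dotProduct, mulVec, mul_sum, Pi.abs_apply]
  exact sum_le_sum fun a _ => sum_le_sum fun b _ => mul_signedAdj_apply_mul_le G σ hσ hη hx a b

theorem le_sqrt_sub_of_sq_add_le {s c : ℝ} (h : s ^ 2 + s ≤ c) : s ≤ √(c + 1 / 4) - 1 / 2 := by
  have : |s + 1 / 2| ≤ √(c + 1 / 4) := Real.abs_le_sqrt (by linarith)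
  linarith [le_abs_self (s + 1 / 2)]

theorem dotProduct_signedAdj_mulVec_le_sqrt {n : ℕ} (G : SimpleGraph (Fin n))
    [DecidableRel G.Adj] (σ : Fin n → Fin n → ℝ) (hσ : IsSignFn G σ) {ε : ℕ}
    (hε : ε ∈ lowerBounds (FrustrationSet G σ)) {x : Fin n → ℝ} (hx : ∑ v, x v ^ 2 = 1) :
    x ⬝ᵥ signedAdj G σ *ᵥ x ≤ √(2 * ((#G.edgeFinset : ℝ) - ε) + 1 / 4) - 1 / 2 := by
  set η : Fin n → ℝ := fun v => if x v < 0 then -1 else 1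
  have hη : ∀ v, η v = 1 ∨ η v = -1 := fun v => by by_cases h : x v < 0 <;> simp [η, h]
  have hxη : ∀ v, x v = η v * |x v| := fun v => by
    by_cases h : x v < 0
    · simp [η, h, abs_of_neg h]
    · simp [η, h, abs_of_nonneg (not_lt.mp h)]
  set H := switchPositiveGraph G σ hσ.1 η
  have hεH : (ε : ℝ) + #H.edgeFinset ≤ #G.edgeFinset := by
    have hηη : ∀ v, η v * η v = 1 := fun v => by rcases hη v with h | h <;> simp [h]
    exact_mod_cast card_edgeFinset_add_le_of_isBalanced (switchPositiveGraph_le ..)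
      (isBalanced_switchPositiveGraph _ _ _ _ hηη) hε
  have hunit : ∑ v, |x| v ^ 2 = 1 := by simpa only [Pi.abs_apply, sq_abs] using hx
  refine (dotProduct_signedAdj_mulVec_le G σ hσ hη hxη).trans (le_sqrt_sub_of_sq_add_le ?_)
  calc _ ≤ 2 * (#H.edgeFinset : ℝ) := H.sq_add_self_dotProduct_adjMatrix_mulVec_le |x| hunit
    _ ≤ 2 * ((#G.edgeFinset : ℝ) - ε) := by linarith

/-- `λ₁(Σ) ≤ √(2(m - ε(Σ)) + 1/4) - 1/2`. -/
theorem stmt_9 {n : ℕ} (G : SimpleGraph (Fin n)) [DecidableRel G.Adj]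
    (σ : Fin n → Fin n → ℝ) (hσ : IsSignFn G σ)
    (hA : (signedAdj G σ).IsHermitian)
    (lam1 : ℝ) (hlam : IsGreatest (Set.range hA.eigenvalues) lam1)
    (ε : ℕ) (hε : IsLeast (FrustrationSet G σ) ε) :
    lam1 ≤ Real.sqrt (2 * ((G.edgeFinset.card : ℝ) - ε) + 1 / 4) - 1 / 2 := by
  obtain ⟨⟨i, rfl⟩, -⟩ := hlam
  have hunit : ∑ v, hA.eigenvectorBasis i v ^ 2 = 1 := by
    rw [← EuclideanSpace.real_norm_sq_eq, hA.eigenvectorBasis.orthonormal.1 i, one_pow]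
  have hquad : hA.eigenvalues i =
      hA.eigenvectorBasis i ⬝ᵥ signedAdj G σ *ᵥ hA.eigenvectorBasis i := by
    simpa using hA.eigenvalues_eq i
  rw [hquad]
  exact dotProduct_signedAdj_mulVec_le_sqrt G σ hσ hε.2 hunit
end
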